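/- If $f$ is continuous on $[a,b]$, then the generalised fractional integral ${}^A I_{a+}^{\alpha,\beta} f$ is continuous on the open interval $(a,b)$. -/

import Mathlib

open MeasureTheory Set

/-- The generalised fractional integral with analytic kernel `A`. -/
noncomputable def genInt (a : ℝ) (α β : ℂ) (A : ℂ → ℂ) (f : ℝ → ℂ) (t : ℝ) : ℂ :=
  ∫ τ in a..t, (((t - τ : ℝ) : ℂ) ^ (α - 1)) * A (((t - τ : ℝ) : ℂ) ^ β) * f τ

open Topology Filter intervalIntegral
open scoped Interval

/-!
The substitution `τ = a + s (t - a)` turns `∫ τ in a..t, k (t - τ) • f τ` into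
`(t - a) • ∫ s in 0..1, k ((t - a) (1 - s)) • f (a + s (t - a))`, which moves the dependence on
`t` from the bound of integration into the integrand. For the kernel
`k x = x ^ (α - 1) A (x ^ β)` one has `‖k x‖ ≤ M x ^ (Re α - 1)` with `M` a bound of `A` on the
closed ball of radius `(b - a) ^ Re β`, so for `t` near `t₀ ∈ (a, b)` the new integrand is
dominated by a multiple of the integrable function `(1 - s) ^ (Re α - 1)`, and dominated
convergence gives continuity.
-/

section VolterraKernel

variable {E : Type*} [NormedAddCommGroup E] [NormedSpace ℂ E] {k : ℝ → ℂ} {f : ℝ → E} {a b : ℝ}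

lemma continuousAt_kernel_smul_comp_affine (hk : ContinuousOn k (Ioo 0 (b - a)))
    (hf : ContinuousOn f (Icc a b)) {t s : ℝ} (ht : t ∈ Ioo a b) (hs : s ∈ Ioo (0 : ℝ) 1) :
    ContinuousAt (fun p : ℝ × ℝ => k (p.1 - ((p.1 - a) * p.2 + a)) • f ((p.1 - a) * p.2 + a))
      (t, s) := by
  obtain ⟨hat, htb⟩ := ht
  obtain ⟨hs0, hs1⟩ := hs
  have hk_mem : t - ((t - a) * s + a) ∈ Ioo 0 (b - a) := by constructor <;> nlinarith
  have hf_mem : (t - a) * s + a ∈ Ioo a b := by constructor <;> nlinarith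
  have hk_at := (hk.continuousAt (isOpen_Ioo.mem_nhds hk_mem)).comp
    (x := (t, s)) (f := fun p : ℝ × ℝ => p.1 - ((p.1 - a) * p.2 + a)) (by fun_prop)
  have hf_at := (hf.continuousAt (Icc_mem_nhds_iff.2 hf_mem)).comp
    (x := (t, s)) (f := fun p : ℝ × ℝ => (p.1 - a) * p.2 + a) (by fun_prop)
  exact hk_at.smul hf_at

lemma norm_kernel_smul_comp_affine_le {γ M Mf : ℝ}
    (hkM : ∀ x ∈ Ioo 0 (b - a), ‖k x‖ ≤ M * x ^ (γ - 1)) (hfM : ∀ x ∈ Icc a b, ‖f x‖ ≤ Mf)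
    {t s : ℝ} (ht : t ∈ Ioo a b) (hs : s ∈ Ioo (0 : ℝ) 1) :
    ‖k (t - ((t - a) * s + a)) • f ((t - a) * s + a)‖
      ≤ M * Mf * (t - a) ^ (γ - 1) * (1 - s) ^ (γ - 1) := by
  obtain ⟨hat, htb⟩ := ht
  obtain ⟨hs0, hs1⟩ := hs
  have hx : (t - a) * (1 - s) ∈ Ioo 0 (b - a) := by constructor <;> nlinarith
  have hy : (t - a) * s + a ∈ Icc a b := by constructor <;> nlinarith
  calc ‖k (t - ((t - a) * s + a)) • f ((t - a) * s + a)‖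
      = ‖k ((t - a) * (1 - s))‖ * ‖f ((t - a) * s + a)‖ := by rw [norm_smul]; ring_nf
    _ ≤ M * ((t - a) * (1 - s)) ^ (γ - 1) * Mf :=
        mul_le_mul (hkM _ hx) (hfM _ hy) (norm_nonneg _) ((norm_nonneg _).trans (hkM _ hx))
    _ = M * Mf * (t - a) ^ (γ - 1) * (1 - s) ^ (γ - 1) := by
        rw [Real.mul_rpow (by linarith) (by linarith)]; ring

lemma continuousAt_integral_kernel_smul_comp_affine {γ M : ℝ} (hγ : 0 < γ)
    (hk : ContinuousOn k (Ioo 0 (b - a))) (hkM : ∀ x ∈ Ioo 0 (b - a), ‖k x‖ ≤ M * x ^ (γ - 1))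
    (hf : ContinuousOn f (Icc a b)) {t₀ : ℝ} (ht₀ : t₀ ∈ Ioo a b) :
    ContinuousAt
      (fun t => ∫ s in (0 : ℝ)..1, k (t - ((t - a) * s + a)) • f ((t - a) * s + a)) t₀ := by
  obtain ⟨Mf, hMf⟩ := isCompact_Icc.exists_bound_of_continuousOn hf
  have hMf0 : 0 ≤ Mf := (norm_nonneg _).trans (hMf a (left_mem_Icc.2 (ht₀.1.trans ht₀.2).le))
  have hM0 : 0 ≤ M := nonneg_of_mul_nonneg_left
    ((norm_nonneg _).trans (hkM (t₀ - a) ⟨by linarith [ht₀.1], by linarith [ht₀.2]⟩))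
    (Real.rpow_pos_of_pos (sub_pos.2 ht₀.1) _)
  have hae : ∀ᵐ s, s ∈ Ι (0 : ℝ) 1 → s ∈ Ioo (0 : ℝ) 1 := by
    rw [← ae_restrict_iff' measurableSet_uIoc, uIoc_of_le zero_le_one,
      Measure.restrict_congr_set Ioo_ae_eq_Ioc.symm]
    exact ae_restrict_mem measurableSet_Ioo
  have hnear : ∀ᶠ t in 𝓝 t₀, t ∈ Ioo a b := isOpen_Ioo.mem_nhds ht₀
  have hpow : ∀ᶠ t in 𝓝 t₀, (t - a) ^ (γ - 1) < (t₀ - a) ^ (γ - 1) + 1 :=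
    ((continuousAt_id.sub continuousAt_const).rpow_const
      (Or.inl (sub_ne_zero.2 ht₀.1.ne'))).eventually_lt continuousAt_const (lt_add_one _)
  refine continuousAt_of_dominated_interval
    (bound := fun s => M * Mf * ((t₀ - a) ^ (γ - 1) + 1) * (1 - s) ^ (γ - 1)) ?_ ?_ ?_ ?_
  · filter_upwards [hnear] with t ht
    rw [uIoc_of_le zero_le_one, ← Measure.restrict_congr_set Ioo_ae_eq_Ioc]
    refine ContinuousOn.aestronglyMeasurable (fun s hs => ?_) measurableSet_Ioo
    exact ((continuousAt_kernel_smul_comp_affine hk hf ht hs).comp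
      (x := s) (f := fun s => (t, s)) (by fun_prop)).continuousWithinAt
  · filter_upwards [hnear, hpow] with t ht htpow
    filter_upwards [hae] with s hs hmem
    have hs1 : 0 ≤ 1 - s := sub_nonneg.2 (hs hmem).2.le
    calc _ ≤ M * Mf * (t - a) ^ (γ - 1) * (1 - s) ^ (γ - 1) :=
          norm_kernel_smul_comp_affine_le hkM hMf ht (hs hmem)
      _ ≤ _ := by gcongr
  · refine IntervalIntegrable.const_mul ?_ _
    simpa using ((intervalIntegrable_rpow' (a := 0) (b := 1) (by linarith)).comp_sub_left 1).symm
  · filter_upwards [hae] with s hs hmem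
    exact (continuousAt_kernel_smul_comp_affine hk hf ht₀ (hs hmem)).comp
      (x := t₀) (f := fun t => (t, s)) (by fun_prop)

theorem continuousOn_integral_kernel_smul {γ M : ℝ} (hγ : 0 < γ)
    (hk : ContinuousOn k (Ioo 0 (b - a))) (hkM : ∀ x ∈ Ioo 0 (b - a), ‖k x‖ ≤ M * x ^ (γ - 1))
    (hf : ContinuousOn f (Icc a b)) :
    ContinuousOn (fun t => ∫ τ in a..t, k (t - τ) • f τ) (Ioo a b) := by
  have hsubst : (fun t => ∫ τ in a..t, k (t - τ) • f τ) = fun t =>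
      (t - a) • ∫ s in (0 : ℝ)..1, k (t - ((t - a) * s + a)) • f ((t - a) * s + a) := by
    funext t
    have h := smul_integral_comp_mul_add (a := 0) (b := 1) (fun τ => k (t - τ) • f τ) (t - a) a
    simp only [mul_zero, zero_add, mul_one, sub_add_cancel] at h
    exact h.symm
  rw [hsubst]
  exact fun t ht => ((continuousAt_id.sub continuousAt_const).smul
    (continuousAt_integral_kernel_smul_comp_affine hγ hk hkM hf ht)).continuousWithinAt

end VolterraKernel

lemma norm_ofReal_cpow_le {β : ℂ} {r x : ℝ} (hβ : 0 ≤ β.re) (hx : x ∈ Ioc 0 r) :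
    ‖(x : ℂ) ^ β‖ ≤ r ^ β.re := by
  rw [Complex.norm_cpow_eq_rpow_re_of_pos hx.1]
  exact Real.rpow_le_rpow hx.1.le hx.2 hβ

noncomputable def fracKernel (α β : ℂ) (A : ℂ → ℂ) (x : ℝ) : ℂ :=
  (x : ℂ) ^ (α - 1) * A ((x : ℂ) ^ β)

lemma genInt_eq_integral_fracKernel_smul (a : ℝ) (α β : ℂ) (A : ℂ → ℂ) (f : ℝ → ℂ) :
    genInt a α β A f = fun t => ∫ τ in a..t, fracKernel α β A (t - τ) • f τ := by
  funext t
  simp only [genInt, fracKernel, smul_eq_mul]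

lemma continuousOn_fracKernel {α β : ℂ} {A : ℂ → ℂ} {r R : ℝ} (hβ : 0 ≤ β.re)
    (hR : r ^ β.re < R) (hA : ContinuousOn A (Metric.ball 0 R)) :
    ContinuousOn (fracKernel α β A) (Ioc 0 r) := by
  intro x hx
  have hslit : (x : ℂ) ∈ Complex.slitPlane := Complex.ofReal_mem_slitPlane.2 hx.1
  have hball : (x : ℂ) ^ β ∈ Metric.ball 0 R :=
    mem_ball_zero_iff.2 ((norm_ofReal_cpow_le hβ hx).trans_lt hR)
  have hpow (γ : ℂ) : ContinuousAt (fun y : ℝ => (y : ℂ) ^ γ) x :=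
    Complex.continuous_ofReal.continuousAt.cpow continuousAt_const hslit
  exact ((hpow _).mul ((hA.continuousAt (Metric.isOpen_ball.mem_nhds hball)).comp
    (f := fun y : ℝ => (y : ℂ) ^ β) (hpow β))).continuousWithinAt

lemma norm_fracKernel_le {α β : ℂ} {A : ℂ → ℂ} {r M x : ℝ} (hβ : 0 ≤ β.re)
    (hA : ∀ z ∈ Metric.closedBall 0 (r ^ β.re), ‖A z‖ ≤ M) (hx : x ∈ Ioc 0 r) :
    ‖fracKernel α β A x‖ ≤ M * x ^ (α.re - 1) := by
  rw [fracKernel, norm_mul, Complex.norm_cpow_eq_rpow_re_of_pos hx.1, mul_comm,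
    Complex.sub_re, Complex.one_re]
  exact mul_le_mul_of_nonneg_right
    (hA _ (mem_closedBall_zero_iff.2 (norm_ofReal_cpow_le hβ hx))) (Real.rpow_nonneg hx.1.le _)

theorem genInt_continuousOn_general (a b : ℝ) (α β : ℂ)
    (hα : 0 < α.re) (hβ : 0 ≤ β.re) (R : ℝ) (hR : (b - a) ^ β.re < R)
    (A : ℂ → ℂ) (hA : AnalyticOn ℂ A (Metric.ball 0 R))
    (f : ℝ → ℂ) (hf : ContinuousOn f (Set.Icc a b)) :
    ContinuousOn (genInt a α β A f) (Set.Ioo a b) := by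
  obtain ⟨M, hM⟩ := (isCompact_closedBall (0 : ℂ) ((b - a) ^ β.re)).exists_bound_of_continuousOn
    (hA.continuousOn.mono (Metric.closedBall_subset_ball hR))
  rw [genInt_eq_integral_fracKernel_smul]
  exact continuousOn_integral_kernel_smul hα
    ((continuousOn_fracKernel hβ hR hA.continuousOn).mono Ioo_subset_Ioc_self)
    (fun x hx => norm_fracKernel_le hβ hM (Ioo_subset_Ioc_self hx)) hf

/-- If `f` is continuous on `[a,b]`, then `ᴬI_{a+}^{α,β} f` is continuous on `(a,b)`. -/
theorem genInt_continuousOn (a b : ℝ) (hab : a < b) (α β : ℂ)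
    (hα : 0 < α.re) (hβ : 0 ≤ β.re) (R : ℝ) (hR : (b - a) ^ β.re < R)
    (A : ℂ → ℂ) (hA : AnalyticOn ℂ A (Metric.ball 0 R))
    (f : ℝ → ℂ) (hf : ContinuousOn f (Set.Icc a b)) :
    ContinuousOn (genInt a α β A f) (Set.Ioo a b) :=
  genInt_continuousOn_general a b α β hα hβ R hR A hA f hf
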